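/- Let (P, A, →) be a labelled transition system with P and A finite, I = P, and consider Hennessy–Milner logic with variables indexed by P. Let D(p) = ⋀_{a ∈ A} ⋀_{p' : p →a p'} ⟨a⟩X_{p'} and D̃(p) = ⋀_{a ∈ A} [a] ⋁_{p' : p →a p'} X_{p'}. Define F(S) = {(p,q) | ∀a ∀p'. p →a p' ⟹ ∃q'. q →a q' ∧ (p',q') ∈ S}, F̃(S) = (F(S⁻¹))⁻¹, and recursively F_(1)sim = F, F_(1)opsim = F̃, F_(n+1)sim(S) = F(S) ∩ ν F_(n)opsim, F_(n+1)opsim(S) = F̃(S) ∩ ν F_(n)sim, with ⊑_(n)sim = ν F_(n)sim and ⊑_(n)opsim = ν F_(n)opsim. Define declarations recursively with semantics: G_(1)sim = V⟦D⟧, G_(1)opsim = V⟦D̃⟧, and G_(n+1)sim(σ)(p) = V⟦D(p)⟧σ ∩ (ν G_(n)opsim)(p), G_(n+1)opsim(σ)(p) = V⟦D̃(p)⟧σ ∩ (ν G_(n)sim)(p). Then for every n ≥ 1 and all p, q ∈ P: (p,q) ∈ ⊑_(n)sim iff q ∈ (ν G_(n)sim)(p), and (p,q) ∈ ⊑_(n)opsim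 iff q ∈ (ν G_(n)opsim)(p); i.e., the declarations D_(n)sim = D ∧ νD_(n-1)opsim and D_(n)opsim = D̃ ∧ νD_(n-1)sim characterize the n-nested simulation preorders. -/
import Mathlib


/-- Formulas of Hennessy–Milner logic over actions A with variables indexed by I. -/
inductive Formula (A I : Type*) where
  | tt : Formula A I
  | ff : Formula A I
  | var : I → Formula A I
  | and : Formula A I → Formula A I → Formula A I
  | or : Formula A I → Formula A I → Formula A I
  | dia : A → Formula A I → Formula A I
  | box : A → Formula A I → Formula A I

/-- The semantics V⟦F⟧σ of a formula relative to an LTS (P, A, Tr) and a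
variable interpretation σ : I → 𝒫(P). -/
def sem {P A I : Type*} (Tr : P → A → P → Prop) : Formula A I → (I → Set P) → Set P
  | .tt, _ => Set.univ
  | .ff, _ => ∅
  | .var i, σ => σ i
  | .and f g, σ => sem Tr f σ ∩ sem Tr g σ
  | .or f g, σ => sem Tr f σ ∪ sem Tr g σ
  | .dia a f, σ => {p | ∃ q, Tr p a q ∧ q ∈ sem Tr f σ}
  | .box a f, σ => {p | ∀ q, Tr p a q → q ∈ sem Tr f σ}

/-- The derived function V⟦D⟧ of a declaration D : I → Formulas:
(V⟦D⟧σ)(i) = V⟦D(i)⟧σ. -/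
def declSem {P A I : Type*} (Tr : P → A → P → Prop) (D : I → Formula A I) :
    (I → Set P) → (I → Set P) := fun σ i => sem Tr (D i) σ

/-- Finite conjunction of a list of formulas. -/
def bigAnd {A I : Type*} : List (Formula A I) → Formula A I
  | [] => .tt
  | f :: fs => .and f (bigAnd fs)

/-- Finite disjunction of a list of formulas. -/
def bigOr {A I : Type*} : List (Formula A I) → Formula A I
  | [] => .ff
  | f :: fs => .or f (bigOr fs)

/-- The declaration D(p) = ⋀_{a ∈ A} ⋀_{p' : p →a p'} ⟨a⟩X_{p'}. -/
noncomputable def Dsim {P A : Type*} [Fintype P] [Fintype A] (Tr : P → A → P → Prop)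
    [∀ p a p', Decidable (Tr p a p')] (p : P) : Formula A P :=
  bigAnd ((Finset.univ : Finset A).toList.map fun a =>
    bigAnd (((Finset.univ : Finset P).filter (fun p' => Tr p a p')).toList.map fun p' =>
      .dia a (.var p')))

/-- The declaration D̃(p) = ⋀_{a ∈ A} [a] ⋁_{p' : p →a p'} X_{p'}. -/
noncomputable def Dop {P A : Type*} [Fintype P] [Fintype A] (Tr : P → A → P → Prop)
    [∀ p a p', Decidable (Tr p a p')] (p : P) : Formula A P :=
  bigAnd ((Finset.univ : Finset A).toList.map fun a =>
    .box a (bigOr (((Finset.univ : Finset P).filter (fun p' => Tr p a p')).toList.map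
      fun p' => .var p')))

/-- The simulation functional: (p,q) ∈ F(S) iff every transition p →a p' is
matched by some q →a q' with (p',q') ∈ S. -/
def Fsim {P A : Type*} (Tr : P → A → P → Prop) (S : Set (P × P)) : Set (P × P) :=
  {pq | ∀ (a : A) (p' : P), Tr pq.1 a p' → ∃ q' : P, Tr pq.2 a q' ∧ (p', q') ∈ S}

/-- The inverse of a binary relation, `S⁻¹ = {(q,p) | (p,q) ∈ S}`. -/
def relInv {P : Type*} (S : Set (P × P)) : Set (P × P) := {x | (x.2, x.1) ∈ S}

/-- F̃(S) = (F(S⁻¹))⁻¹ for the simulation functional F. -/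
def Fop {P A : Type*} (Tr : P → A → P → Prop) (S : Set (P × P)) : Set (P × P) :=
  relInv (Fsim Tr (relInv S))

/-- The variable interpretation σ_S(p) = {q | (p,q) ∈ S} associated to a relation S. -/
def sigmaOf {P : Type*} (S : Set (P × P)) : P → Set P := fun p => {q | (p, q) ∈ S}

/-- The greatest fixed point of a monotone endofunction of a complete lattice,
given by the Knaster–Tarski construction. -/
def nu {α : Type*} [CompleteLattice α] (f : α → α) : α := sSup {x | x ≤ f x}

/-- The pair of functionals (F_(n+1)sim, F_(n+1)opsim) defining the (n+1)-nested
simulation and inverse simulation preorders (index n : ℕ corresponds to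
nesting level n+1): F_(1)sim = F, F_(1)opsim = F̃,
F_(n+1)sim(S) = F(S) ∩ ν F_(n)opsim, F_(n+1)opsim(S) = F̃(S) ∩ ν F_(n)sim. -/
def FN {P A : Type*} (Tr : P → A → P → Prop) :
    ℕ → (Set (P × P) → Set (P × P)) × (Set (P × P) → Set (P × P))
  | 0 => (Fsim Tr, Fop Tr)
  | n + 1 =>
    (fun S => Fsim Tr S ∩ nu (FN Tr n).2, fun S => Fop Tr S ∩ nu (FN Tr n).1)

/-- The pair of semantic declaration functionals (G_(n+1)sim, G_(n+1)opsim) on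
P → 𝒫(P) (index n : ℕ corresponds to nesting level n+1):
G_(1)sim = V⟦D⟧, G_(1)opsim = V⟦D̃⟧,
G_(n+1)sim(σ)(p) = V⟦D(p)⟧σ ∩ (ν G_(n)opsim)(p),
G_(n+1)opsim(σ)(p) = V⟦D̃(p)⟧σ ∩ (ν G_(n)sim)(p). -/
noncomputable def GN {P A : Type*} [Fintype P] [Fintype A] (Tr : P → A → P → Prop)
    [∀ p a p', Decidable (Tr p a p')] :
    ℕ → ((P → Set P) → (P → Set P)) × ((P → Set P) → (P → Set P))
  | 0 => (declSem Tr (Dsim Tr), declSem Tr (Dop Tr))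
  | n + 1 =>
    (fun σ p => sem Tr (Dsim Tr p) σ ∩ nu (GN Tr n).2 p,
     fun σ p => sem Tr (Dop Tr p) σ ∩ nu (GN Tr n).1 p)



set_option linter.unusedSectionVars false

section Aux
variable {P A : Type*} [Fintype P] [Fintype A] (Tr : P → A → P → Prop)
  [∀ p a p', Decidable (Tr p a p')]

lemma sem_bigAnd (L : List (Formula A P)) (σ : P → Set P) (q : P) :
    q ∈ sem Tr (bigAnd L) σ ↔ ∀ f ∈ L, q ∈ sem Tr f σ := by
  induction L with
  | nil => simp [bigAnd, sem]
  | cons f fs ih => simp [bigAnd, sem, ih]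

lemma sem_bigOr (L : List (Formula A P)) (σ : P → Set P) (q : P) :
    q ∈ sem Tr (bigOr L) σ ↔ ∃ f ∈ L, q ∈ sem Tr f σ := by
  induction L with
  | nil => simp [bigOr, sem]
  | cons f fs ih => simp [bigOr, sem, ih]

lemma sem_Dsim (p q : P) (σ : P → Set P) :
    q ∈ sem Tr (Dsim Tr p) σ ↔ ∀ a p', Tr p a p' → ∃ q', Tr q a q' ∧ q' ∈ σ p' := by
  rw [Dsim, sem_bigAnd]
  constructor
  · intro h a p' hpp'
    have h1 := h _ (List.mem_map.2 ⟨a, by simp, rfl⟩)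
    rw [sem_bigAnd] at h1
    have h2 := h1 _ (List.mem_map.2 ⟨p', by simp [hpp'], rfl⟩)
    simpa [sem] using h2
  · intro h f hf
    obtain ⟨a, -, rfl⟩ := List.mem_map.1 hf
    rw [sem_bigAnd]
    intro g hg
    obtain ⟨p', hp', rfl⟩ := List.mem_map.1 hg
    simp only [Finset.mem_toList, Finset.mem_filter, Finset.mem_univ, true_and] at hp'
    simpa [sem] using h a p' hp'

lemma sem_Dop (p q : P) (σ : P → Set P) :
    q ∈ sem Tr (Dop Tr p) σ ↔ ∀ a q', Tr q a q' → ∃ p', Tr p a p' ∧ q' ∈ σ p' := by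
  rw [Dop, sem_bigAnd]
  constructor
  · intro h a q' hqq'
    have h1 := h _ (List.mem_map.2 ⟨a, by simp, rfl⟩)
    simp only [sem, Set.mem_setOf_eq] at h1
    have h2 := h1 _ hqq'
    rw [sem_bigOr] at h2
    obtain ⟨f, hf, hq'⟩ := h2
    obtain ⟨p', hp', rfl⟩ := List.mem_map.1 hf
    simp only [Finset.mem_toList, Finset.mem_filter, Finset.mem_univ, true_and] at hp'
    exact ⟨p', hp', by simpa [sem] using hq'⟩
  · intro h f hf
    obtain ⟨a, -, rfl⟩ := List.mem_map.1 hf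
    simp only [sem, Set.mem_setOf_eq]
    intro q' hqq'
    rw [sem_bigOr]
    obtain ⟨p', hpp', hq'⟩ := h a q' hqq'
    exact ⟨_, List.mem_map.2 ⟨p', by simp [hpp'], rfl⟩, by simpa [sem] using hq'⟩

lemma sigmaOf_Fsim (S : Set (P × P)) :
    sigmaOf (Fsim Tr S) = declSem Tr (Dsim Tr) (sigmaOf S) := by
  funext p; ext q
  simp [sigmaOf, Fsim, declSem, sem_Dsim]

lemma sigmaOf_Fop (S : Set (P × P)) :
    sigmaOf (Fop Tr S) = declSem Tr (Dop Tr) (sigmaOf S) := by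
  funext p; ext q
  simp [sigmaOf, Fop, Fsim, relInv, declSem, sem_Dop]

/-- Inverse of sigmaOf. -/
def relOf {P : Type*} (σ : P → Set P) : Set (P × P) := {x | x.2 ∈ σ x.1}

lemma sigmaOf_relOf {P : Type*} (σ : P → Set P) : sigmaOf (relOf σ) = σ := rfl

lemma sigmaOf_le_iff {P : Type*} (S T : Set (P × P)) :
    sigmaOf S ≤ sigmaOf T ↔ S ≤ T := by
  constructor
  · intro h x hx; exact h x.1 hx
  · intro h p q hq; exact h hq

lemma nu_conj {P : Type*} (f : Set (P × P) → Set (P × P))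
    (g : (P → Set P) → (P → Set P))
    (h : ∀ S, sigmaOf (f S) = g (sigmaOf S)) :
    sigmaOf (nu f) = nu g := by
  have himg : {σ : P → Set P | σ ≤ g σ} = sigmaOf '' {S | S ≤ f S} := by
    ext σ
    simp only [Set.mem_setOf_eq, Set.mem_image]
    constructor
    · intro hσ
      refine ⟨relOf σ, ?_, rfl⟩
      rw [show (relOf σ ≤ f (relOf σ)) ↔ _ from (sigmaOf_le_iff _ _).symm, h, sigmaOf_relOf]
      exact hσ
    · rintro ⟨S, hS, rfl⟩
      rw [← h, sigmaOf_le_iff]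
      exact hS
  rw [nu, nu, himg]
  funext p; ext q
  simp only [sigmaOf, Set.mem_setOf_eq, sSup_apply, Set.sSup_eq_sUnion, Set.mem_sUnion]
  constructor
  · rintro ⟨S, hS, hq⟩
    exact ⟨_, ⟨⟨sigmaOf S, ⟨S, hS, rfl⟩⟩, rfl⟩, hq⟩
  · rintro ⟨t, ⟨⟨σ, ⟨S, hS, rfl⟩⟩, rfl⟩, hq⟩
    exact ⟨S, hS, hq⟩

lemma key : ∀ n : ℕ,
    sigmaOf (nu (FN Tr n).1) = nu (GN Tr n).1 ∧
    sigmaOf (nu (FN Tr n).2) = nu (GN Tr n).2 := by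
  intro n
  induction n with
  | zero =>
    exact ⟨nu_conj _ _ (sigmaOf_Fsim Tr), nu_conj _ _ (sigmaOf_Fop Tr)⟩
  | succ n ih =>
    constructor
    · apply nu_conj
      intro S
      funext p; ext q
      simp only [FN, GN, sigmaOf, Set.mem_setOf_eq, Set.mem_inter_iff]
      rw [show ((p, q) ∈ Fsim Tr S) ↔ q ∈ sigmaOf (Fsim Tr S) p from Iff.rfl,
        sigmaOf_Fsim, ← ih.2]
      rfl
    · apply nu_conj
      intro S
      funext p; ext q
      simp only [FN, GN, sigmaOf, Set.mem_setOf_eq, Set.mem_inter_iff]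
      rw [show ((p, q) ∈ Fop Tr S) ↔ q ∈ sigmaOf (Fop Tr S) p from Iff.rfl,
        sigmaOf_Fop, ← ih.1]
      rfl

end Aux

/-- For every n ≥ 1 and all p, q ∈ P:
(p,q) ∈ ⊑_(n)sim iff q ∈ (ν G_(n)sim)(p), and (p,q) ∈ ⊑_(n)opsim iff
q ∈ (ν G_(n)opsim)(p); i.e. the declarations D_(n)sim = D ∧ νD_(n-1)opsim and
D_(n)opsim = D̃ ∧ νD_(n-1)sim characterize the n-nested simulation preorders.
(Here index n : ℕ corresponds to nesting level n+1.) -/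
theorem stmt18 {P A : Type*} [Fintype P] [Fintype A] (Tr : P → A → P → Prop)
    [∀ p a p', Decidable (Tr p a p')] :
    ∀ (n : ℕ) (p q : P),
      ((p, q) ∈ nu (FN Tr n).1 ↔ q ∈ nu (GN Tr n).1 p) ∧
      ((p, q) ∈ nu (FN Tr n).2 ↔ q ∈ nu (GN Tr n).2 p) := by
  intro n p q
  obtain ⟨h1, h2⟩ := key Tr n
  constructor
  · rw [← h1]; rfl
  · rw [← h2]; rfl
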